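/- arXiv:2112.12445 — 6 statements merged into one kernel-verified Lean document; each statement's English description precedes it below -/
import Mathlib

section
/- Suppose (h, β) is such that 1, β_1, …, β_{λ−1} are linearly independent over F_q, and let D = span_{F_{q^m}}{ h_0^{[i]} + Σ_{j=1}^{λ−1} β_j h_j^{[i]} : 0 ≤ i ≤ n−k−1 }. Let A = (a_{j,i})_{j,i=0}^{λ−1} be an invertible λ×λ matrix with entries in F_q. Then c := a_{0,0} + Σ_{i=1}^{λ−1} a_{i,0} β_i is nonzero; defining β'_j = (a_{0,j} + Σ_{i=1}^{λ−1} a_{i,j} β_i)/c for j = 1,…,λ−1, and defining (h'_0,…,h'_{λ−1}) as the unique tuple of vectors satisfying c·h_j = a_{j,0} h'_0 + Σ_{i=1}^{λ−1} a_{j,i} h'_i for all j = 0,…,λ−1, the elements 1, β'_1, …, β'_{λ−1} are linearly independent over F_q and span_{F_{q^m}}{ h'_0^{[i]} + Σ_{j=1}^{λ−1} β'_j h'_j^{[i]} : 0 ≤ i ≤ n−k−1 } = D. -/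
noncomputable section

/-- `frob q m i x = x ^ (q ^ (i mod m))`, the `i`-th Frobenius power `x^{[i]}`. -/
def frob {K : Type} [Field K] (q m : ℕ) (i : ℤ) (x : K) : K :=
  x ^ q ^ (i % (m : ℤ)).toNat

/-- `yv q m h β u j` is `y^{[u,j]} = h_0^{[j]} + ∑_{i=1}^{λ-1} (β i)^{[u]} (h i)^{[j]}`,
under the convention `β 0 = 1`. -/
def yv {K : Type} [Field K] (q m : ℕ) {n lam : ℕ}
    (h : Fin lam → Fin n → K) (β : Fin lam → K) (u j : ℤ) : Fin n → K :=
  fun t => ∑ i, frob q m u (β i) * frob q m j (h i t)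

/-- `C_I`, the `F_{q^m}`-span of the `y^{[u,j]}` for `(u,j) ∈ I`. -/
def codeC {K : Type} [Field K] (q m : ℕ) {n lam : ℕ}
    (h : Fin lam → Fin n → K) (β : Fin lam → K) (I : Set (ℤ × ℤ)) :
    Submodule K (Fin n → K) :=
  Submodule.span K ((fun p : ℤ × ℤ => yv q m h β p.1 p.2) '' I)

/-- `C^{[i]}`, the componentwise Frobenius image of a subspace. -/
def frobSub {K : Type} [Field K] (q m : ℕ) {n : ℕ} (i : ℤ)
    (C : Submodule K (Fin n → K)) : Submodule K (Fin n → K) :=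
  Submodule.span K ((fun v : Fin n → K => fun t => frob q m i (v t)) '' (C : Set (Fin n → K)))

/-- `1, β 1, …, β (λ-1)` (i.e. `β` with `β 0 = 1`) are linearly independent over `F_q`. -/
def LinIndepFq {K : Type} [Field K] (q : ℕ) {lam : ℕ} (β : Fin lam → K) : Prop :=
  ∀ c : Fin lam → K, (∀ i, c i ^ q = c i) → (∑ i, c i * β i) = 0 → ∀ i, c i = 0

/-- index set of `C_pub⊥`, namely `{0} × [0, n-k-1]`. -/
def CpubSet (n k : ℕ) : Set (ℤ × ℤ) :=
  {(0 : ℤ)} ×ˢ Set.Icc (0 : ℤ) ((n : ℤ) - (k : ℤ) - 1)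

def I1set (lam : ℕ) : Set (ℤ × ℤ) :=
  ⋃ u ∈ Set.Icc (0 : ℤ) ((lam : ℤ) - 2), {u} ×ˢ Set.Icc u ((lam : ℤ) - 2)

def I3set (n k lam : ℕ) : Set (ℤ × ℤ) :=
  ⋃ u ∈ Set.Icc (0 : ℤ) ((lam : ℤ) - 1),
    {u} ×ˢ Set.Icc ((n : ℤ) - (k : ℤ)) ((n : ℤ) - (k : ℤ) + u - 1)

def I4set (n k lam : ℕ) : Set (ℤ × ℤ) :=
  I3set n k lam ∪
    {(lam : ℤ)} ×ˢ Set.Icc ((n : ℤ) - (k : ℤ)) ((n : ℤ) - (k : ℤ) + (lam : ℤ) - 1)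

def Mset (n k lam : ℕ) : Set (ℤ × ℤ) :=
  ⋃ u ∈ Set.Icc (0 : ℤ) (lam : ℤ), {u} ×ˢ Set.Icc u ((n : ℤ) - (k : ℤ) + u - 1)

/-- `I + a`. -/
def shiftSet (I : Set (ℤ × ℤ)) (a : ℤ) : Set (ℤ × ℤ) :=
  (fun p : ℤ × ℤ => (p.1 + a, p.2 + a)) '' I

/-- Assumption (i): for every tuple of `λ` integers pairwise distinct modulo `m`,
the matrix with rows `(1, β_1^{[u]}, …, β_{λ-1}^{[u]})` is invertible. -/
def CondI {K : Type} [Field K] (q m : ℕ) {lam : ℕ} (β : Fin lam → K) : Prop :=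
  ∀ u : Fin lam → ℤ, (∀ s t, u s % (m : ℤ) = u t % (m : ℤ) → s = t) →
    IsUnit (Matrix.det (Matrix.of fun s t : Fin lam => frob q m (u s) (β t)))

/-- Assumption (ii): the `y^{[u,j]}`, `(u,j) ∈ M`, are linearly independent. -/
def CondII {K : Type} [Field K] (q m : ℕ) (k : ℕ) {n lam : ℕ}
    (h : Fin lam → Fin n → K) (β : Fin lam → K) : Prop :=
  LinearIndependent K (fun p : Mset n k lam => yv q m h β p.val.1 p.val.2)

/-- `S_i = C_pub⊥^{[i]} + ⋯ + C_pub⊥^{[i+λ-1]}`. -/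
def Ssum {K : Type} [Field K] (q m : ℕ) (k : ℕ) {n lam : ℕ}
    (h : Fin lam → Fin n → K) (β : Fin lam → K) (i : ℤ) : Submodule K (Fin n → K) :=
  ⨆ t : Fin lam, frobSub q m (i + (t : ℕ)) (codeC q m h β (CpubSet n k))

end

/-!
Put `v = β ᵥ* A`, so that `c = v 0` and `β' = c⁻¹ • v`. Since `|K| = q ^ m`, `q` is a power of
the characteristic, so `x ↦ x ^ q` and every `frob q m i` are field endomorphisms of `K`, and
they fix the entries of `A`. Hence an `F_q`-relation `d ⬝ᵥ v = 0` is the `F_q`-relation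
`(A *ᵥ d) ⬝ᵥ β = 0`, which forces `A *ᵥ d = 0` and so `d = 0`; the same argument applied to a
column of `A` gives `c ≠ 0`. Applying `frob q m i` to `A * h' = c • h` shows that the `i`-th
generator built from `(h', β')` is `c⁻¹ * c^{[i]}` times the one built from `(h, β)`, so both
families span `D`.
-/

open Matrix

section Frobenius

variable {K : Type} [Field K] [Fintype K] {q m : ℕ}

theorem exists_ringHom_eq_pow_pow_of_card_eq_pow (hcard : Fintype.card K = q ^ m) (r : ℕ) :
    ∃ φ : K →+* K, ∀ x, φ x = x ^ q ^ r := by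
  obtain ⟨N, hp, hN⟩ := FiniteField.card K (ringChar K)
  have : ExpChar K (ringChar K) := ExpChar.prime hp
  have hm : m ≠ 0 := by
    rintro rfl
    exact (Fintype.one_lt_card (α := K)).ne' (by rwa [pow_zero] at hcard)
  obtain ⟨a, -, rfl⟩ := (Nat.dvd_prime_pow hp).1 (hN ▸ hcard ▸ dvd_pow_self q hm)
  exact ⟨iterateFrobenius K (ringChar K) (a * r), fun x => by rw [iterateFrobenius_def, pow_mul]⟩

theorem exists_ringHom_coe_eq_frob (hcard : Fintype.card K = q ^ m) (i : ℤ) :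
    ∃ φ : K →+* K, ⇑φ = frob q m i :=
  let ⟨φ, hφ⟩ := exists_ringHom_eq_pow_pow_of_card_eq_pow hcard (i % (m : ℤ)).toNat
  ⟨φ, funext hφ⟩

end Frobenius

theorem frob_eq_self {K : Type} [Field K] {q : ℕ} {x : K} (hx : x ^ q = x) (m : ℕ) (i : ℤ) :
    frob q m i x = x :=
  (congrFun (pow_iterate q _) x).symm.trans (Function.iterate_fixed hx _)

section LinIndepFq

variable {K : Type} [Field K] {q lam : ℕ} {β : Fin lam → K}

theorem LinIndepFq.smul (hβ : LinIndepFq q β) {a : K} (ha : a ≠ 0) :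
    LinIndepFq q (a • β) := by
  intro d hd hsum
  refine hβ d hd ((mul_eq_zero.1 ?_).resolve_left ha)
  simpa only [Finset.mul_sum, Pi.smul_apply, smul_eq_mul, mul_left_comm] using hsum

theorem LinIndepFq.vecMul_apply_ne_zero (hβ : LinIndepFq q β)
    {A : Matrix (Fin lam) (Fin lam) K} (hA : ∀ i j, A i j ^ q = A i j) (hdet : IsUnit A.det)
    (j : Fin lam) : (β ᵥ* A) j ≠ 0 := by
  intro h0
  refine hdet.ne_zero (det_eq_zero_of_column_eq_zero j (hβ (A · j) (hA · j) ?_))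
  simpa only [vecMul, dotProduct, mul_comm] using h0

theorem LinIndepFq.vecMul (hβ : LinIndepFq q β) (φ : K →+* K) (hφ : ∀ x, φ x = x ^ q)
    {A : Matrix (Fin lam) (Fin lam) K} (hA : ∀ i j, A i j ^ q = A i j) (hdet : IsUnit A.det) :
    LinIndepFq q (β ᵥ* A) := by
  intro d hd hsum
  have hAd : ∀ s, (A *ᵥ d) s ^ q = (A *ᵥ d) s := by
    intro s
    have hAφ : A.map φ = A := Matrix.ext fun i j => (hφ _).trans (hA i j)
    have hdφ : φ ∘ d = d := funext fun i => (hφ _).trans (hd i)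
    rw [← hφ, RingHom.map_mulVec, hAφ, hdφ]
  have hrel : (A *ᵥ d) ⬝ᵥ β = 0 := by
    rwa [dotProduct_comm, dotProduct_mulVec, dotProduct_comm]
  exact congrFun (eq_zero_of_mulVec_eq_zero hdet.ne_zero (funext (hβ _ hAd hrel)))

end LinIndepFq

theorem Matrix.existsUnique_mul_eq {n ι R : Type*} [Fintype n] [DecidableEq n] [CommRing R]
    {A : Matrix n n R} (hA : IsUnit A.det) (B : Matrix n ι R) : ∃! X, A * X = B :=
  ⟨A⁻¹ * B, mul_nonsing_inv_cancel_left A B hA,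
    fun _ hX => hX ▸ (nonsing_inv_mul_cancel_left A _ hA).symm⟩

theorem vecMul_dotProduct_map_eq {n ι R : Type*} [Fintype n] [CommRing R] (φ : R →+* R)
    {A : Matrix n n R} (hφA : ∀ i j, φ (A i j) = A i j) {c : R} {h h' : Matrix n ι R}
    (hh' : A * h' = c • h) (β : n → R) (t : ι) :
    (β ᵥ* A) ⬝ᵥ (fun j => φ (h' j t)) = φ c * β ⬝ᵥ fun j => φ (h j t) := by
  have hAφ : A.map φ = A := Matrix.ext hφA
  have hcol : A *ᵥ (fun j => φ (h' j t)) = φ c • fun j => φ (h j t) := by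
    funext s
    have hst := congrFun (congrFun hh'.symm s) t
    rw [Matrix.smul_apply, smul_eq_mul, mul_apply] at hst
    rw [← hAφ, ← Function.comp_def φ, ← RingHom.map_mulVec, Pi.smul_apply, smul_eq_mul,
      ← map_mul, hst]
    rfl
  rw [← dotProduct_mulVec, hcol, dotProduct_smul, smul_eq_mul]

theorem Submodule.span_range_smul_eq {R M ι : Type*} [Semiring R] [AddCommMonoid M] [Module R M]
    {a : ι → R} (ha : ∀ i, IsUnit (a i)) (v : ι → M) :
    span R (Set.range fun i => a i • v i) = span R (Set.range v) := by
  simp only [span_range_eq_iSup, span_singleton_smul_eq (ha _)]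

theorem stmt1_general (q m n k lam : ℕ) [NeZero lam]
    (K : Type) [Field K] [Fintype K] (hcard : Fintype.card K = q ^ m)
    (h : Fin lam → Fin n → K) (β : Fin lam → K)
    (hβ : LinIndepFq q β)
    (A : Matrix (Fin lam) (Fin lam) K) (hA : ∀ i j, A i j ^ q = A i j)
    (hAinv : IsUnit A.det)
    (D : Submodule K (Fin n → K))
    (hD : D = Submodule.span K (Set.range fun i : Fin (n - k) =>
      fun t => ∑ j, β j * frob q m ((i : ℕ) : ℤ) (h j t)))
    (c : K) (hc : c = ∑ i, A i 0 * β i)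
    (β' : Fin lam → K) (hβ' : ∀ j, β' j = (∑ i, A i j * β i) / c) :
    c ≠ 0 ∧
    (∃! h' : Fin lam → Fin n → K, ∀ j t, c * h j t = ∑ i, A j i * h' i t) ∧
    ∀ h' : Fin lam → Fin n → K, (∀ j t, c * h j t = ∑ i, A j i * h' i t) →
      LinIndepFq q β' ∧
      Submodule.span K (Set.range fun i : Fin (n - k) =>
        fun t => ∑ j, β' j * frob q m ((i : ℕ) : ℤ) (h' j t)) = D := by
  have hcv : c = (β ᵥ* A) 0 := by simp only [hc, vecMul, dotProduct, mul_comm]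
  have hβ'v : β' = c⁻¹ • (β ᵥ* A) := funext fun j => by
    simp only [hβ', vecMul, dotProduct, mul_comm, div_eq_inv_mul, Pi.smul_apply, smul_eq_mul]
  have hc0 : c ≠ 0 := hcv ▸ hβ.vecMul_apply_ne_zero hA hAinv 0
  have hsol : ∀ h' : Fin lam → Fin n → K,
      (∀ j t, c * h j t = ∑ i, A j i * h' i t) ↔ A * Matrix.of h' = c • Matrix.of h := by
    intro h'
    simp only [← Matrix.ext_iff, Matrix.smul_apply, mul_apply, of_apply, smul_eq_mul]
    exact forall₂_congr fun _ _ => eq_comm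
  refine ⟨hc0, (existsUnique_congr hsol).2 (existsUnique_mul_eq hAinv _),
    fun h' hh' => ⟨?_, ?_⟩⟩
  · obtain ⟨φ, hφ⟩ := exists_ringHom_eq_pow_pow_of_card_eq_pow hcard 1
    rw [hβ'v]
    exact (hβ.vecMul φ (by simpa only [pow_one] using hφ) hA hAinv).smul (inv_ne_zero hc0)
  · have hgen : ∀ i : Fin (n - k), (fun t => ∑ j, β' j * frob q m ((i : ℕ) : ℤ) (h' j t)) =
        (c⁻¹ * frob q m ((i : ℕ) : ℤ) c) • fun t => ∑ j, β j * frob q m ((i : ℕ) : ℤ) (h j t) := by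
      intro i
      obtain ⟨φ, hφ⟩ := exists_ringHom_coe_eq_frob hcard ((i : ℕ) : ℤ)
      funext t
      have hmap := vecMul_dotProduct_map_eq φ (fun i j => hφ ▸ frob_eq_self (hA i j) _ _)
        ((hsol h').1 hh') β t
      simp only [hβ'v, hφ, dotProduct, Pi.smul_apply, smul_eq_mul, of_apply] at hmap ⊢
      simp only [mul_assoc, ← Finset.mul_sum, hmap]
    have hunit : ∀ i : Fin (n - k), IsUnit (c⁻¹ * frob q m ((i : ℕ) : ℤ) c) :=
      fun _ => (mul_ne_zero (inv_ne_zero hc0) (pow_ne_zero _ hc0)).isUnit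
    rw [funext hgen, Submodule.span_range_smul_eq hunit, hD]

/-- the action of an invertible matrix `A` over `F_q` on a pair `(h, β)`
produces a pair `(h', β')` with `1, β'_1, …, β'_{λ-1}` again `F_q`-linearly independent
and generating the same code `D`. -/
theorem stmt1 (q m n k lam : ℕ) (hq : ∃ p e : ℕ, p.Prime ∧ 0 < e ∧ q = p ^ e)
    (hm : 0 < m) (hk : k < n) (hlam : 2 ≤ lam) [NeZero lam]
    (K : Type) [Field K] [Fintype K] (hcard : Fintype.card K = q ^ m)
    (h : Fin lam → Fin n → K) (β : Fin lam → K) (hβ0 : β 0 = 1)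
    (hβ : LinIndepFq q β)
    (A : Matrix (Fin lam) (Fin lam) K) (hA : ∀ i j, A i j ^ q = A i j)
    (hAinv : IsUnit A.det)
    (D : Submodule K (Fin n → K))
    (hD : D = Submodule.span K (Set.range fun i : Fin (n - k) =>
      fun t => ∑ j, β j * frob q m ((i : ℕ) : ℤ) (h j t)))
    (c : K) (hc : c = ∑ i, A i 0 * β i)
    (β' : Fin lam → K) (hβ' : ∀ j, β' j = (∑ i, A i j * β i) / c) :
    c ≠ 0 ∧
    (∃! h' : Fin lam → Fin n → K, ∀ j t, c * h j t = ∑ i, A j i * h' i t) ∧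
    ∀ h' : Fin lam → Fin n → K, (∀ j t, c * h j t = ∑ i, A j i * h' i t) →
      LinIndepFq q β' ∧
      Submodule.span K (Set.range fun i : Fin (n - k) =>
        fun t => ∑ j, β' j * frob q m ((i : ℕ) : ℤ) (h' j t)) = D :=
  stmt1_general q m n k lam K hcard h β hβ A hA hAinv D hD c hc β' hβ'
end

section
/- Assume 1, β_1, …, β_{λ−1} are linearly independent over F_q and λ ≤ n−k. Then dim_{F_{q^m}}( C_pub⊥ + C_pub⊥^{[1]} + ⋯ + C_pub⊥^{[λ]} ) ≤ λ(n−k) + λ. -/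
/-!
Frobenius sends `y^{[u,j]}` to `y^{[u+s,j+s]}`, so `C_pub⊥ + ⋯ + C_pub⊥^{[λ]}` lies in `C_M`, the
span of the `(λ + 1)(n - k)` vectors `y^{[u,c]}` with `0 ≤ u ≤ λ` and `u ≤ c < u + n - k`. In each
column `λ ≤ c < n - k` all `λ + 1` of them are combinations of the `λ` vectors `h_i^{[c]}`, which
saves one dimension per such column: `(λ + 1)(n - k) - (n - k - λ) = λ(n - k) + λ`.
-/

section FiniteFieldFrobenius

variable {K : Type} [Field K] [Fintype K] {q m : ℕ}

theorem pow_pow_eq_pow_pow_mod (hcard : Fintype.card K = q ^ m) (x : K) (s : ℕ) :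
    x ^ q ^ s = x ^ q ^ (s % m) := by
  nth_rewrite 1 [← Nat.mod_add_div s m]
  rw [pow_add, pow_mul, pow_mul, ← hcard, FiniteField.pow_card_pow]

theorem frob_eq_pow_of_modEq (hcard : Fintype.card K = q ^ m) (hm : 0 < m) {i : ℤ} {s : ℕ}
    (hs : i ≡ s [ZMOD m]) (x : K) : frob q m i x = x ^ q ^ s := by
  have hi : (((i % m).toNat : ℕ) : ℤ) = i % m := Int.toNat_of_nonneg (Int.emod_nonneg _ (by omega))
  have hmod : (i % m).toNat % m = s % m := by
    zify
    rw [hi, Int.emod_emod, hs]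
  rw [frob, pow_pow_eq_pow_pow_mod hcard, hmod, ← pow_pow_eq_pow_pow_mod hcard]

theorem frob_frob (hcard : Fintype.card K = q ^ m) (hm : 0 < m) (a b : ℤ) (x : K) :
    frob q m a (frob q m b x) = frob q m (a + b) x := by
  have hmod (i : ℤ) : i ≡ (i % m).toNat [ZMOD m] := by
    rw [Int.toNat_of_nonneg (Int.emod_nonneg _ (by omega))]
    exact (Int.mod_modEq i m).symm
  rw [frob_eq_pow_of_modEq hcard hm ((hmod a).add (hmod b)), frob, frob, ← pow_mul, ← pow_add,
    add_comm]

end FiniteFieldFrobenius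

def RingHom.compLeftₛₗ {R S : Type*} [Semiring R] [Semiring S] (σ : R →+* S) (ι : Type*) :
    (ι → R) →ₛₗ[σ] (ι → S) where
  toFun v := σ ∘ v
  map_add' v w := by ext; simp
  map_smul' a v := by ext; simp

section Frobenius

variable {K : Type} [Field K] (p e m : ℕ) [ExpChar K p]

def frobRingHom (i : ℤ) : K →+* K :=
  iterateFrobenius K p (e * (i % m).toNat)

theorem frobRingHom_apply (i : ℤ) (x : K) : frobRingHom p e m i x = frob (p ^ e) m i x := by
  simp [frobRingHom, iterateFrobenius_def, frob, pow_mul]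

theorem frobSub_span_le {n : ℕ} (i : ℤ) (S : Set (Fin n → K)) :
    frobSub (p ^ e) m i (Submodule.span K S) ≤
      Submodule.span K ((fun v t => frob (p ^ e) m i (v t)) '' S) := by
  have hF : (fun v : Fin n → K => fun t => frob (p ^ e) m i (v t)) =
      (frobRingHom p e m i).compLeftₛₗ (Fin n) := by
    ext v t
    exact (frobRingHom_apply p e m i (v t)).symm
  rw [frobSub, Submodule.span_le, hF]
  exact Submodule.image_span_subset_span _ S

variable {p e m} [Fintype K]

theorem frob_yv (hcard : Fintype.card K = (p ^ e) ^ m) (hm : 0 < m) {n lam : ℕ}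
    (h : Fin lam → Fin n → K) (β : Fin lam → K) (s u j : ℤ) (t : Fin n) :
    frob (p ^ e) m s (yv (p ^ e) m h β u j t) = yv (p ^ e) m h β (s + u) (s + j) t := by
  simp only [yv, ← frobRingHom_apply p e m s, map_sum, map_mul]
  simp only [frobRingHom_apply, frob_frob hcard hm]

theorem frobSub_codeC_le (hcard : Fintype.card K = (p ^ e) ^ m) (hm : 0 < m) {n lam : ℕ}
    (h : Fin lam → Fin n → K) (β : Fin lam → K) (I : Set (ℤ × ℤ)) (s : ℤ) :
    frobSub (p ^ e) m s (codeC (p ^ e) m h β I) ≤ codeC (p ^ e) m h β (shiftSet I s) := by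
  refine (frobSub_span_le p e m s _).trans (Submodule.span_mono ?_)
  rintro _ ⟨_, ⟨⟨u, j⟩, hI, rfl⟩, rfl⟩
  refine ⟨(u + s, j + s), ⟨(u, j), hI, rfl⟩, ?_⟩
  ext t
  simp only [frob_yv hcard hm, add_comm]

end Frobenius

section Counting

variable {K : Type} [Field K] (q m : ℕ) {n lam : ℕ} (h : Fin lam → Fin n → K) (β : Fin lam → K)

theorem codeC_mono {I J : Set (ℤ × ℤ)} (hIJ : I ⊆ J) : codeC q m h β I ≤ codeC q m h β J :=
  Submodule.span_mono (Set.image_mono hIJ)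

theorem shiftSet_CpubSet_subset_Mset (k : ℕ) {i : ℤ} (hi₀ : 0 ≤ i) (hi : i ≤ lam) :
    shiftSet (CpubSet n k) i ⊆ Mset n k lam := by
  rintro _ ⟨⟨u, j⟩, ⟨hu, hj⟩, rfl⟩
  simp only [Set.mem_singleton_iff, Set.mem_Icc] at hu hj
  simp only [Mset, Set.mem_iUnion, Set.mem_prod, Set.mem_singleton_iff, Set.mem_Icc]
  exact ⟨i, ⟨hi₀, hi⟩, by omega, by omega, by omega⟩

theorem yv_mem_span_range_frob (u j : ℤ) :
    yv q m h β u j ∈ Submodule.span K (Set.range fun i t => frob q m j (h i t)) := by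
  have hyv : yv q m h β u j = ∑ i, frob q m u (β i) • fun t => frob q m j (h i t) := by
    ext t
    simp [yv]
  rw [hyv]
  exact Submodule.sum_mem _ fun i _ => Submodule.smul_mem _ _ (Submodule.subset_span ⟨i, rfl⟩)

/-- With `N = n - k`: the columns `c < λ` and `c + N` of `M` are folded into one column `c`
holding `λ + 1` vectors, and each column `λ ≤ c < N` is replaced by the `λ` vectors `h_i^{[c]}`. -/
def msetSpanningFamily (N : ℕ) :
    (Fin lam × Fin (lam + 1)) ⊕ (Fin (N - lam) × Fin lam) → Fin n → K
  | .inl (c, u) =>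
    if (u : ℕ) ≤ c then yv q m h β (u : ℕ) (c : ℕ) else yv q m h β (u : ℕ) ((c : ℕ) + N : ℕ)
  | .inr (d, i) => fun t => frob q m ((lam + d : ℕ) : ℤ) (h i t)

theorem codeC_Mset_le_span_msetSpanningFamily {k : ℕ} (hlam : lam ≤ n - k) :
    codeC q m h β (Mset n k lam) ≤
      Submodule.span K (Set.range (msetSpanningFamily q m h β (n - k))) := by
  rw [codeC, Submodule.span_le]
  rintro _ ⟨⟨u, c⟩, hM, rfl⟩
  simp only [Mset, Set.mem_iUnion, Set.mem_prod, Set.mem_singleton_iff, Set.mem_Icc] at hM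
  obtain ⟨u, ⟨hu₀, hu⟩, rfl, huc, hc⟩ := hM
  lift u to ℕ using hu₀
  lift c to ℕ using by omega
  simp only [Nat.cast_le, SetLike.mem_coe] at hu huc ⊢
  rcases lt_or_ge c lam with hc_lam | hlam_c
  · refine Submodule.subset_span ⟨.inl (⟨c, hc_lam⟩, ⟨u, by omega⟩), ?_⟩
    simp [msetSpanningFamily, huc]
  rcases lt_or_ge c (n - k) with hc_N | hN_c
  · refine Submodule.span_mono ?_ (yv_mem_span_range_frob q m h β u c)
    rintro _ ⟨i, rfl⟩
    exact ⟨.inr (⟨c - lam, by omega⟩, i), by simp [msetSpanningFamily, Nat.add_sub_cancel' hlam_c]⟩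
  · refine Submodule.subset_span ⟨.inl (⟨c - (n - k), by omega⟩, ⟨u, by omega⟩), ?_⟩
    simp [msetSpanningFamily, show ¬u ≤ c - (n - k) by omega, Nat.sub_add_cancel hN_c]

theorem finrank_codeC_Mset_le {k : ℕ} (hlam : lam ≤ n - k) :
    Module.finrank K (codeC q m h β (Mset n k lam)) ≤ lam * (n - k) + lam := by
  obtain ⟨d, hd⟩ := Nat.exists_eq_add_of_le hlam
  calc Module.finrank K (codeC q m h β (Mset n k lam))
      ≤ Fintype.card ((Fin lam × Fin (lam + 1)) ⊕ (Fin (n - k - lam) × Fin lam)) :=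
        (Submodule.finrank_mono (codeC_Mset_le_span_msetSpanningFamily q m h β hlam)).trans
          (finrank_range_le_card _)
    _ = lam * (n - k) + lam := by
        simp only [Fintype.card_sum, Fintype.card_prod, Fintype.card_fin, hd,
          Nat.add_sub_cancel_left]
        ring

end Counting

theorem stmt4_general (q m n k lam : ℕ) (hq : ∃ p e : ℕ, p.Prime ∧ 0 < e ∧ q = p ^ e)
    (hm : 0 < m)
    (hlamnk : lam ≤ n - k)
    (K : Type) [Field K] [Fintype K] (hcard : Fintype.card K = q ^ m)
    (h : Fin lam → Fin n → K) (β : Fin lam → K) :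
    Module.finrank K
      ↥(⨆ i : Fin (lam + 1), frobSub q m ((i : ℕ) : ℤ) (codeC q m h β (CpubSet n k)))
      ≤ lam * (n - k) + lam := by
  obtain ⟨p, e, hp, -, rfl⟩ := hq
  have : Fact p.Prime := ⟨hp⟩
  have : CharP K p := charP_of_card_eq_prime_pow (hcard.trans (pow_mul p e m).symm)
  have hsum_le : (⨆ i : Fin (lam + 1), frobSub (p ^ e) m ((i : ℕ) : ℤ)
      (codeC (p ^ e) m h β (CpubSet n k))) ≤ codeC (p ^ e) m h β (Mset n k lam) :=
    iSup_le fun i => (frobSub_codeC_le hcard hm h β _ _).trans <|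
      codeC_mono _ _ h β <| shiftSet_CpubSet_subset_Mset k (by omega) (by omega)
  exact (Submodule.finrank_mono hsum_le).trans (finrank_codeC_Mset_le _ _ h β hlamnk)

/-- distinguisher: `dim(C_pub⊥ + C_pub⊥^{[1]} + ⋯ + C_pub⊥^{[λ]}) ≤ λ(n-k)+λ`. -/
theorem stmt4 (q m n k lam : ℕ) (hq : ∃ p e : ℕ, p.Prime ∧ 0 < e ∧ q = p ^ e)
    (hm : 0 < m) (hk : k < n) (hnm : n ≤ m) (hlam : 2 ≤ lam) [NeZero lam]
    (hlamnk : lam ≤ n - k)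
    (K : Type) [Field K] [Fintype K] (hcard : Fintype.card K = q ^ m)
    (h : Fin lam → Fin n → K) (β : Fin lam → K) (hβ0 : β 0 = 1)
    (hβ : LinIndepFq q β) :
    Module.finrank K
      ↥(⨆ i : Fin (lam + 1), frobSub q m ((i : ℕ) : ℤ) (codeC q m h β (CpubSet n k)))
      ≤ lam * (n - k) + lam :=
  stmt4_general q m n k lam hq hm hlamnk K hcard h β
end

section
/- Suppose 1, β_1, …, β_{λ−1} are linearly independent over F_q, let A = (a_{j,i})_{j,i=0}^{λ−1} be an invertible λ×λ matrix with entries in F_q, set c = a_{0,0} + Σ_{i=1}^{λ−1} a_{i,0} β_i (so c ≠ 0), let β'_j = (a_{0,j} + Σ_{i=1}^{λ−1} a_{i,j} β_i)/c for j = 1,…,λ−1, and let (h'_0,…,h'_{λ−1}) be the unique tuple with c·h_j = a_{j,0} h'_0 + Σ_{i=1}^{λ−1} a_{j,i} h'_i for all j = 0,…,λ−1. Then for every ℓ ∈ ℤ, h'_0 + Σ_{j=1}^{λ−1} (β'_j)^{[−ℓ]} h'_j = (c / c^{[−ℓ]}) · ( h_0 + Σ_{j=1}^{λ−1} β_j^{[−ℓ]}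 h_j ); in particular the one-dimensional F_{q^m}-spans of h_0 + Σ_{j=1}^{λ−1} β_j^{[−ℓ]} h_j and of h'_0 + Σ_{j=1}^{λ−1} (β'_j)^{[−ℓ]} h'_j coincide. -/
/-! Since `q` is a power of the characteristic, `x ↦ x^{[-ℓ]}` is a ring endomorphism of `K`
fixing `F_q`, hence the entries of `A`. Applying it to `c β' = Aᵀ β` and pairing with `h'`
gives `c^{[-ℓ]} ∑ β'^{[-ℓ]} h' = ∑ β^{[-ℓ]} (A h') = c ∑ β^{[-ℓ]} h`, and `c ≠ 0` because `A` is
invertible and `1, β_1, …, β_{λ-1}` are independent over `F_q`. -/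

open Finset

theorem frob_prime_pow_eq_iterateFrobenius {K : Type} [Field K] (p e m : ℕ) [ExpChar K p]
    (i : ℤ) (x : K) :
    frob (p ^ e) m i x = iterateFrobenius K p (e * (i % (m : ℤ)).toNat) x := by
  rw [frob, iterateFrobenius_def, pow_mul]

theorem frob_eq_self_of_pow_eq_self {K : Type} [Field K] {q : ℕ} (m : ℕ) (i : ℤ) {x : K}
    (hx : x ^ q = x) : frob q m i x = x := by
  have hfix := Function.iterate_fixed (f := fun y : K => y ^ q) hx (i % (m : ℤ)).toNat
  rwa [pow_iterate] at hfix

theorem LinIndepFq.sum_mul_ne_zero_of_isUnit_det {K : Type} [Field K] {q lam : ℕ}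
    {β : Fin lam → K} (hβ : LinIndepFq q β) {A : Matrix (Fin lam) (Fin lam) K} {j : Fin lam}
    (hA : ∀ i, A i j ^ q = A i j) (hAinv : IsUnit A.det) : ∑ i, A i j * β i ≠ 0 := fun h0 =>
  hAinv.ne_zero (Matrix.det_eq_zero_of_column_eq_zero j (hβ (fun i => A i j) hA h0))

theorem sum_map_mul_eq_div_mul_sum {K ι : Type} [Field K] [Fintype ι] (F : K →+* K)
    (A : Matrix ι ι K) (hFA : ∀ i j, F (A i j) = A i j) (β β' h h' : ι → K) (c : K)
    (hβ' : ∀ j, β' j = (∑ i, A i j * β i) / c) (hh' : ∀ j, c * h j = ∑ i, A j i * h' i) :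
    ∑ j, F (β' j) * h' j = c / F c * ∑ j, F (β j) * h j := calc
  ∑ j, F (β' j) * h' j = (∑ j, ∑ i, F (β i) * (A i j * h' j)) / F c := by
    simp only [hβ', map_div₀, map_sum, map_mul, hFA, sum_div, div_mul_eq_mul_div, sum_mul]
    exact sum_congr rfl fun j _ => sum_congr rfl fun i _ => by ring
  _ = (∑ i, F (β i) * (c * h i)) / F c := by
    rw [sum_comm]
    simp only [← mul_sum, hh']
  _ = c / F c * ∑ j, F (β j) * h j := by
    rw [mul_sum, sum_div]
    exact sum_congr rfl fun i _ => by ring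

theorem stmt11_general (q m n lam : ℕ) (hq : ∃ p e : ℕ, p.Prime ∧ 0 < e ∧ q = p ^ e)
    [NeZero lam]
    (K : Type) [Field K] [Fintype K] (hcard : Fintype.card K = q ^ m)
    (h : Fin lam → Fin n → K) (β : Fin lam → K)
    (hβ : LinIndepFq q β)
    (A : Matrix (Fin lam) (Fin lam) K) (hA : ∀ i j, A i j ^ q = A i j)
    (hAinv : IsUnit A.det)
    (c : K) (hc : c = ∑ i, A i 0 * β i)
    (β' : Fin lam → K) (hβ' : ∀ j, β' j = (∑ i, A i j * β i) / c)
    (h' : Fin lam → Fin n → K) (hh' : ∀ j t, c * h j t = ∑ i, A j i * h' i t) :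
    ∀ ℓ : ℤ,
      (fun t => ∑ j, frob q m (-ℓ) (β' j) * h' j t) =
        (fun t => (c / frob q m (-ℓ) c) * ∑ j, frob q m (-ℓ) (β j) * h j t) ∧
      Submodule.span K {fun t => ∑ j, frob q m (-ℓ) (β' j) * h' j t} =
        Submodule.span K {fun t => ∑ j, frob q m (-ℓ) (β j) * h j t} := by
  obtain ⟨p, e, hp, -, rfl⟩ := hq
  have : Fact p.Prime := ⟨hp⟩
  have : CharP K p := charP_of_card_eq_prime_pow (hcard.trans (pow_mul p e m).symm)
  have hc0 : c ≠ 0 := hc ▸ hβ.sum_mul_ne_zero_of_isUnit_det (fun i => hA i 0) hAinv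
  intro ℓ
  set F := iterateFrobenius K p (e * (-ℓ % (m : ℤ)).toNat)
  have hfrob : ∀ x, frob (p ^ e) m (-ℓ) x = F x := frob_prime_pow_eq_iterateFrobenius p e m (-ℓ)
  have hFA : ∀ i j, F (A i j) = A i j := fun i j =>
    (hfrob _).symm.trans (frob_eq_self_of_pow_eq_self m (-ℓ) (hA i j))
  have hrescale : (fun t => ∑ j, frob (p ^ e) m (-ℓ) (β' j) * h' j t) =
      (c / frob (p ^ e) m (-ℓ) c) • fun t => ∑ j, frob (p ^ e) m (-ℓ) (β j) * h j t := by
    funext t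
    simp only [hfrob, Pi.smul_apply, smul_eq_mul]
    exact sum_map_mul_eq_div_mul_sum F A hFA β β' (h · t) (h' · t) c hβ' (hh' · t)
  refine ⟨hrescale, ?_⟩
  rw [hrescale, hfrob]
  exact Submodule.span_singleton_smul_eq (div_ne_zero hc0 ((map_ne_zero F).2 hc0)).isUnit _

/-- for every `ℓ ∈ ℤ`,
`h'_0 + ∑_j (β'_j)^{[-ℓ]} h'_j = (c / c^{[-ℓ]}) · (h_0 + ∑_j β_j^{[-ℓ]} h_j)`,
in particular the two one-dimensional spans coincide. -/
theorem stmt11 (q m n lam : ℕ) (hq : ∃ p e : ℕ, p.Prime ∧ 0 < e ∧ q = p ^ e)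
    (hm : 0 < m) (hn : 0 < n) (hnm : n ≤ m) (hlam : 2 ≤ lam) [NeZero lam]
    (K : Type) [Field K] [Fintype K] (hcard : Fintype.card K = q ^ m)
    (h : Fin lam → Fin n → K) (β : Fin lam → K) (hβ0 : β 0 = 1)
    (hβ : LinIndepFq q β)
    (A : Matrix (Fin lam) (Fin lam) K) (hA : ∀ i j, A i j ^ q = A i j)
    (hAinv : IsUnit A.det)
    (c : K) (hc : c = ∑ i, A i 0 * β i)
    (β' : Fin lam → K) (hβ' : ∀ j, β' j = (∑ i, A i j * β i) / c)
    (h' : Fin lam → Fin n → K) (hh' : ∀ j t, c * h j t = ∑ i, A j i * h' i t) :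
    ∀ ℓ : ℤ,
      (fun t => ∑ j, frob q m (-ℓ) (β' j) * h' j t) =
        (fun t => (c / frob q m (-ℓ) c) * ∑ j, frob q m (-ℓ) (β j) * h j t) ∧
      Submodule.span K {fun t => ∑ j, frob q m (-ℓ) (β' j) * h' j t} =
        Submodule.span K {fun t => ∑ j, frob q m (-ℓ) (β j) * h j t} :=
  stmt11_general q m n lam hq K hcard h β hβ A hA hAinv c hc β' hβ' h' hh'
end

section
/- Suppose h_0,…,h_{λ−1} are linearly independent over F_{q^m}, and let i_1,…,i_λ be distinct integers such that the λ×λ matrix whose s-th row is (1, β_1^{[−i_s]}, …, β_{λ−1}^{[−i_s]}) is invertible over F_{q^m}. For i ∈ ℤ let A_i denote the one-dimensional F_{q^m}-span of h_0 + Σ_{j=1}^{λ−1} β_j^{[−i]} h_j, and let A_0 be the span of h_0 + Σ_{j=1}^{λ−1} β_j h_j. Then for every u_0 ∈ A_0 there exists a unique λ-tuple (u_{i_1}, …, u_{i_λ}) ∈ A_{i_1} × ⋯ × A_{i_λ} such that u_{i_1} + ⋯ + u_{i_λ} = u_0. -/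
/-!
With `T = Fintype.linearCombination K h` (injective since the `h j` are independent),
`v i = T (β_0^{[-i]}, …, β_{λ-1}^{[-i]})`. So the `v (ι s)` are the images under `T` of the rows of
the invertible matrix of `hdet`: they are linearly independent and span `range T`, which contains
`v 0`. Uniqueness of the decomposition is then linear independence.
-/

open Submodule Set

section

variable {K V ι : Type*} [Field K] [AddCommGroup V] [Module K V] [Fintype ι]

theorem existsUnique_sum_eq_of_mem_span_range {g : ι → V} (hg : LinearIndependent K g) {u : V}
    (hu : u ∈ span K (range g)) :
    ∃! w : ι → V, (∀ s, w s ∈ K ∙ g s) ∧ ∑ s, w s = u := by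
  obtain ⟨c, rfl⟩ := (mem_span_range_iff_exists_fun K).mp hu
  refine ⟨fun s => c s • g s, ⟨fun s => smul_mem _ _ (mem_span_singleton_self _), rfl⟩, ?_⟩
  rintro w ⟨hw, hsum⟩
  choose d hd using fun s => mem_span_singleton.mp (hw s)
  have hdc : ∀ s, d s = c s :=
    Fintype.linearIndependent_iffₛ.mp hg d c (by simp only [hd]; exact hsum)
  funext s
  rw [← hd s, hdc s]

variable [DecidableEq ι]

theorem Matrix.span_range_row_eq_top {M : Matrix ι ι K} (hM : IsUnit M.det) :
    span K (range M.row) = ⊤ := by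
  refine eq_top_iff.mpr fun x _ =>
    (mem_span_range_iff_exists_fun K).mpr ⟨Matrix.vecMul x M⁻¹, ?_⟩
  rw [Matrix.row_def, ← Matrix.vecMul_eq_sum, Matrix.vecMul_vecMul, Matrix.nonsing_inv_mul M hM,
    Matrix.vecMul_one]

theorem linearIndependent_comp_row {T : (ι → K) →ₗ[K] V} (hT : Function.Injective T)
    {M : Matrix ι ι K} (hM : IsUnit M.det) : LinearIndependent K (T ∘ M.row) :=
  (M.linearIndependent_rows_of_isUnit ((M.isUnit_iff_isUnit_det).mpr hM)).map' T
    (LinearMap.ker_eq_bot.mpr hT)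

theorem mem_span_range_comp_row (T : (ι → K) →ₗ[K] V) {M : Matrix ι ι K} (hM : IsUnit M.det)
    (x : ι → K) : T x ∈ span K (range (T ∘ M.row)) := by
  rw [range_comp, span_image, Matrix.span_range_row_eq_top hM]
  exact mem_map_of_mem mem_top

end

theorem stmt12_general (q m n lam : ℕ)
    (K : Type) [Field K]
    (h : Fin lam → Fin n → K) (β : Fin lam → K)
    (hh : LinearIndependent K h)
    (ι : Fin lam → ℤ)
    (hdet : IsUnit (Matrix.det (Matrix.of fun s t : Fin lam =>
      frob q m (-(ι s)) (β t))))
    (v : ℤ → Fin n → K)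
    (hv : ∀ i : ℤ, v i = fun t => ∑ j, frob q m (-i) (β j) * h j t) :
    ∀ u₀ ∈ Submodule.span K {v 0},
      ∃! w : Fin lam → Fin n → K,
        (∀ s, w s ∈ Submodule.span K {v (ι s)}) ∧ (∑ s, w s) = u₀ := by
  set T := Fintype.linearCombination K h
  have hvT : ∀ i, v i = T fun j => frob q m (-i) (β j) := fun i => by
    ext t
    simp [hv, T, Fintype.linearCombination_apply, Finset.sum_apply]
  have hrow : (fun s => v (ι s)) = T ∘ (Matrix.of fun s t => frob q m (-(ι s)) (β t)).row :=
    funext fun s => hvT (ι s)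
  have hind : LinearIndependent K fun s => v (ι s) :=
    hrow ▸ linearIndependent_comp_row hh.fintypeLinearCombination_injective hdet
  have hv0 : v 0 ∈ span K (range fun s => v (ι s)) := by
    rw [hrow, hvT 0]
    exact mem_span_range_comp_row T hdet _
  exact fun u₀ hu₀ =>
    existsUnique_sum_eq_of_mem_span_range hind ((span_singleton_le_iff_mem _ _).mpr hv0 hu₀)

/-- every `u₀ ∈ A_0` decomposes uniquely as a sum of elements of
`A_{i_1}, …, A_{i_λ}`. -/
theorem stmt12 (q m n lam : ℕ) (hq : ∃ p e : ℕ, p.Prime ∧ 0 < e ∧ q = p ^ e)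
    (hm : 0 < m) (hn : 0 < n) (hnm : n ≤ m) (hlam : 2 ≤ lam) [NeZero lam]
    (K : Type) [Field K] [Fintype K] (hcard : Fintype.card K = q ^ m)
    (h : Fin lam → Fin n → K) (β : Fin lam → K) (hβ0 : β 0 = 1)
    (hh : LinearIndependent K h)
    (ι : Fin lam → ℤ) (hι : Function.Injective ι)
    (hdet : IsUnit (Matrix.det (Matrix.of fun s t : Fin lam =>
      frob q m (-(ι s)) (β t))))
    (v : ℤ → Fin n → K)
    (hv : ∀ i : ℤ, v i = fun t => ∑ j, frob q m (-i) (β j) * h j t) :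
    ∀ u₀ ∈ Submodule.span K {v 0},
      ∃! w : Fin lam → Fin n → K,
        (∀ s, w s ∈ Submodule.span K {v (ι s)}) ∧ (∑ s, w s) = u₀ :=
  stmt12_general q m n lam K h β hh ι hdet v hv
end

section
/- For every set I of λ nonnegative integers, the polynomial f_0 divides f^I in F_q[X_1,…,X_{λ−1}]. -/
noncomputable section
open MvPolynomial

/-- `f^I = det(Mat^I)` where the `s`-th row of `Mat^I` is
`(1, X_1^{q^{i_s}}, X_2^{q^{i_s}}, …, X_{λ-1}^{q^{i_s}})`, the set
`I = {i_1 < ⋯ < i_λ}` being given by its (strictly increasing) enumeration `ι`. -/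
def fI (q lam : ℕ) (F : Type) [CommRing F] (ι : Fin lam → ℕ) : MvPolynomial ℕ F :=
  Matrix.det (Matrix.of fun s t : Fin lam =>
    if (t : ℕ) = 0 then 1 else X (t : ℕ) ^ q ^ ι s)

/-- `f_0 = ∏_{a∈F_q}(X_1+a) · ∏_{i=2}^{λ-1} ∏_{a_0,…,a_{i-1}∈F_q}
(X_i + ∑_{j=1}^{i-1} a_j X_j + a_0)`, where `F_q = {x | x^q = x}` is the subfield
with `q` elements. -/
def f0 (q lam : ℕ) (F : Type) [Field F] [Fintype F] [DecidableEq F] : MvPolynomial ℕ F :=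
  (∏ a ∈ Finset.univ.filter (fun x : F => x ^ q = x), (X 1 + C a)) *
    ∏ i ∈ Finset.Icc 2 (lam - 1),
      ∏ a : Fin i → {x : F // x ^ q = x},
        (X i + ∑ j : Fin i, C (a j).val * if (j : ℕ) = 0 then 1 else X (j : ℕ))

/-- `J_s = {1,…,λ+1} \ {s+1}`. -/
def Jset (lam s : ℕ) : Set ℕ := Set.Icc 1 (lam + 1) \ {s + 1}

/-- `L_s = {λ+1-t : t ∈ (J_s \ {1}) ∪ {0}}`. -/
def Lset (lam s : ℕ) : Set ℕ := (fun t => lam + 1 - t) '' ((Jset lam s \ {1}) ∪ {0})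

/-- `M_s = {λ+1-t : t ∈ J_s}`. -/
def MsetJ (lam s : ℕ) : Set ℕ := (fun t => lam + 1 - t) '' Jset lam s
/-! Every factor `ℓ = X_i + ∑_{0<j<i} a_j X_j + a_0` of `f_0` is irreducible, being of degree one
in `X_i`, and two distinct factors are not associated: there is a point where one vanishes and
the other does not. In the factorial ring `F[X]` it therefore suffices that each `ℓ` divides
`f^I`. As `x ↦ x ^ q ^ k` is additive and fixes `F = 𝔽_q`, adding `a_j` times column `j` to
column `i` of `Mat^I` (column `0` being constant) makes column `i` equal to `(ℓ ^ q ^ i_s)_s`,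
a multiple of `ℓ`. -/

open scoped Matrix

theorem Matrix.det_updateCol_mulVec {n R : Type*} [Fintype n] [DecidableEq n] [CommRing R]
    (A : Matrix n n R) (b : n → R) (i : n) :
    (A.updateCol i (A *ᵥ b)).det = b i * A.det := by
  rw [← cramer_apply, cramer_eq_adjugate_mulVec, mulVec_mulVec, adjugate_mul, smul_mulVec,
    one_mulVec, Pi.smul_apply, smul_eq_mul, mul_comm]

theorem Matrix.dvd_mul_det_of_dvd_mulVec {n R : Type*} [Fintype n] [DecidableEq n] [CommRing R]
    {A : Matrix n n R} {b : n → R} {d : R} (h : ∀ s, d ∣ (A *ᵥ b) s) (i : n) :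
    d ∣ b i * A.det := by
  choose v hv using h
  rw [← A.det_updateCol_mulVec, show A *ᵥ b = d • v from funext hv, det_updateCol_smul]
  exact dvd_mul_right _ _

theorem MvPolynomial.expand_card_pow {K σ : Type*} [Field K] [Fintype K]
    (f : MvPolynomial σ K) (k : ℕ) : expand (Fintype.card K ^ k) f = f ^ Fintype.card K ^ k := by
  obtain ⟨n, hp, hcard⟩ := FiniteField.card K (ringChar K)
  have : Fact (ringChar K).Prime := ⟨hp⟩
  have hfrob : iterateFrobenius K (ringChar K) (n * k) = RingHom.id K := by
    ext x
    rw [iterateFrobenius_def, pow_mul, ← hcard, FiniteField.pow_card_pow]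
    rfl
  rw [hcard, ← pow_mul, ← map_iterateFrobenius_expand (ringChar K), hfrob, map_id]

theorem MvPolynomial.not_dvd_of_eval {σ R : Type*} [CommRing R] {f g : MvPolynomial σ R}
    (v : σ → R) (hf : eval v f = 0) (hg : eval v g ≠ 0) : ¬ f ∣ g :=
  fun h => hg (zero_dvd_iff.mp (hf ▸ map_dvd (eval v) h))

namespace MooreDeterminant

variable {R : Type*} [CommRing R]

/-- `c 0 + ∑_{0<j<i} c j * X j`: the index `0` carries the constant term, as in `f0`. -/
def affineForm {i : ℕ} (c : Fin i → R) : MvPolynomial ℕ R :=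
  ∑ j : Fin i, C (c j) * if (j : ℕ) = 0 then 1 else X (j : ℕ)

def linearFactor (i : ℕ) (c : Fin i → R) : MvPolynomial ℕ R :=
  X i + affineForm c

theorem vars_affineForm_subset [Nontrivial R] {i : ℕ} (c : Fin i → R) :
    (affineForm c).vars ⊆ Finset.range i := by
  classical
  refine (vars_sum_subset _ _).trans (Finset.biUnion_subset.mpr fun j _ => ?_)
  refine (vars_mul _ _).trans (Finset.union_subset (by simp) ?_)
  split_ifs
  · simp
  · simp [vars_X]

theorem irreducible_linearFactor [IsDomain R] (i : ℕ) (c : Fin i → R) :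
    Irreducible (linearFactor i c) := by
  have hi : i ∉ (affineForm c).vars := fun h => by simpa using vars_affineForm_subset c h
  simpa [linearFactor] using
    irreducible_mul_X_add 1 (affineForm c) i one_ne_zero (by simp) hi isRelPrime_one_left

theorem eval_affineForm {i : ℕ} (c : Fin i → R) (v : ℕ → R) :
    eval v (affineForm c) = ∑ j : Fin i, c j * if (j : ℕ) = 0 then 1 else v j := by
  simp [affineForm, apply_ite (eval v)]

theorem eval_affineForm_congr {i : ℕ} (c : Fin i → R) {v w : ℕ → R} (h : ∀ j < i, v j = w j) :
    eval v (affineForm c) = eval w (affineForm c) := by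
  rw [eval_affineForm, eval_affineForm]
  exact Finset.sum_congr rfl fun j _ => by rw [h j j.isLt]

theorem eval_linearFactor_congr {i : ℕ} (c : Fin i → R) {v w : ℕ → R} (h : ∀ j ≤ i, v j = w j) :
    eval v (linearFactor i c) = eval w (linearFactor i c) := by
  rw [linearFactor, map_add, map_add, eval_X, eval_X, h i le_rfl,
    eval_affineForm_congr c fun j hj => h j hj.le]

theorem eval_update_linearFactor (i : ℕ) (c : Fin i → R) (v : ℕ → R) (t : R) :
    eval (Function.update v i t) (linearFactor i c) = t + eval v (affineForm c) := by
  rw [linearFactor, map_add, eval_X, Function.update_self,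
    eval_affineForm_congr c fun j hj => Function.update_of_ne hj.ne _ _]

theorem eval_zero_affineForm {i : ℕ} (c : Fin i → R) {j₀ : Fin i} (h₀ : (j₀ : ℕ) = 0) :
    eval 0 (affineForm c) = c j₀ := by
  rw [eval_affineForm, Finset.sum_eq_single j₀] <;> simp +contextual [Fin.ext_iff, h₀]

theorem eval_single_affineForm {i : ℕ} (c : Fin i → R) {j₀ j : Fin i} (h₀ : (j₀ : ℕ) = 0)
    (hj : (j : ℕ) ≠ 0) : eval (Pi.single (j : ℕ) 1) (affineForm c) = c j₀ + c j := by
  rw [eval_affineForm, Fintype.sum_eq_add j₀ j (by omega)] <;>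
    simp +contextual [Fin.ext_iff, h₀, hj]

theorem eq_of_eval_affineForm_eq {i : ℕ} {c c' : Fin i → R}
    (h : ∀ v, eval v (affineForm c) = eval v (affineForm c')) : c = c' := by
  have h₀ (j₀ : Fin i) (hj₀ : (j₀ : ℕ) = 0) : c j₀ = c' j₀ := by
    simpa only [eval_zero_affineForm _ hj₀] using h 0
  funext j
  by_cases hj : (j : ℕ) = 0
  · exact h₀ j hj
  · obtain ⟨j₀, hj₀⟩ : ∃ j₀ : Fin i, (j₀ : ℕ) = 0 := ⟨⟨0, by omega⟩, rfl⟩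
    have := h (Pi.single (j : ℕ) 1)
    rwa [eval_single_affineForm c hj₀ hj, eval_single_affineForm c' hj₀ hj, h₀ j₀ hj₀,
      add_right_inj] at this

theorem exists_eval_linearFactor_eq_of_lt {i i' : ℕ} (hi : i < i') (c : Fin i → R)
    (c' : Fin i' → R) (a a' : R) :
    ∃ v, eval v (linearFactor i c) = a ∧ eval v (linearFactor i' c') = a' := by
  set v₀ := Function.update (0 : ℕ → R) i (a - eval 0 (affineForm c))
  refine ⟨Function.update v₀ i' (a' - eval v₀ (affineForm c')), ?_, ?_⟩
  · rw [eval_linearFactor_congr c fun j hj => Function.update_of_ne (by omega) _ _,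
      eval_update_linearFactor, sub_add_cancel]
  · rw [eval_update_linearFactor, sub_add_cancel]

theorem eq_of_linearFactor_dvd [Nontrivial R] {i i' : ℕ} {c : Fin i → R} {c' : Fin i' → R}
    (h : linearFactor i c ∣ linearFactor i' c') :
    (⟨i, c⟩ : (i : ℕ) × (Fin i → R)) = ⟨i', c'⟩ := by
  rcases lt_trichotomy i i' with hlt | rfl | hgt
  · obtain ⟨v, hv, hv'⟩ := exists_eval_linearFactor_eq_of_lt hlt c c' 0 1
    exact absurd h (not_dvd_of_eval v hv (hv' ▸ one_ne_zero))
  · congr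
    refine eq_of_eval_affineForm_eq fun w => ?_
    have := map_dvd (eval (Function.update w i (-eval w (affineForm c)))) h
    rwa [eval_update_linearFactor, eval_update_linearFactor, neg_add_cancel, zero_dvd_iff,
      neg_add_eq_zero] at this
  · obtain ⟨v, hv', hv⟩ := exists_eval_linearFactor_eq_of_lt hgt c' c 1 0
    exact absurd h (not_dvd_of_eval v hv (hv' ▸ one_ne_zero))

theorem linearFactor_dvd_fI {F : Type} [Field F] [Fintype F] {q lam : ℕ}
    (hcard : Fintype.card F = q) (ι : Fin lam → ℕ) {i : ℕ} (hi₀ : i ≠ 0) (hi : i < lam)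
    (c : Fin i → F) : linearFactor i c ∣ fI q lam F ι := by
  classical
  set A : Matrix (Fin lam) (Fin lam) (MvPolynomial ℕ F) :=
    Matrix.of fun s t => if (t : ℕ) = 0 then 1 else X (t : ℕ) ^ q ^ ι s
  set i' : Fin lam := ⟨i, hi⟩
  set b : Fin lam → MvPolynomial ℕ F :=
    Pi.single i' 1 + ∑ j, Pi.single (Fin.castLE hi.le j) (C (c j))
  have hb : b i' = 1 := by
    simp [b, Fin.ext_iff, i', fun j : Fin i => j.isLt.ne']
  have hAb (s : Fin lam) : (A *ᵥ b) s = expand (q ^ ι s) (linearFactor i c) := by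
    simp [A, b, Matrix.mulVec_add, Matrix.mulVec_sum, Matrix.mulVec_single, linearFactor,
      affineForm, hi₀, i', apply_ite (expand _)]
  have hdvd (s : Fin lam) : linearFactor i c ∣ (A *ᵥ b) s := by
    rw [hAb, ← hcard, expand_card_pow]
    exact dvd_pow_self _ (pow_ne_zero _ Fintype.card_ne_zero)
  show _ ∣ A.det
  simpa only [hb, one_mul] using Matrix.dvd_mul_det_of_dvd_mulVec hdvd i'

theorem f0_eq_prod_linearFactor (q : ℕ) {lam : ℕ} (hlam : 2 ≤ lam) (F : Type) [Field F]
    [Fintype F] [DecidableEq F] :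
    f0 q lam F = ∏ x ∈ (Finset.Icc 1 (lam - 1)).sigma
        fun i => (Finset.univ : Finset (Fin i → {a : F // a ^ q = a})),
      linearFactor x.1 fun j => (x.2 j : F) := by
  rw [Finset.prod_sigma, ← Finset.insert_Icc_add_one_left_eq_Icc (by omega),
    Finset.prod_insert (by simp), f0]
  congr 1
  rw [Finset.prod_subtype (p := fun a : F => a ^ q = a) _ (fun a => by simp) fun a => X 1 + C a,
    ← (Equiv.funUnique (Fin 1) _).prod_comp]
  simp [linearFactor, affineForm]

end MooreDeterminant

open MooreDeterminant in
theorem stmt14_general (q lam : ℕ)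
    (hlam : 2 ≤ lam)
    (F : Type) [Field F] [Fintype F] [DecidableEq F] (hcard : Fintype.card F = q)
    (ι : Fin lam → ℕ) :
    f0 q lam F ∣ fI q lam F ι := by
  rw [f0_eq_prod_linearFactor q hlam F]
  refine Finset.prod_dvd_of_isRelPrime ?_ fun x hx => ?_
  · rintro ⟨i, a⟩ - ⟨i', a'⟩ - hne
    refine (irreducible_linearFactor _ _).isRelPrime_iff_not_dvd.mpr fun h => hne ?_
    obtain ⟨rfl, h⟩ := Sigma.mk.inj_iff.mp (eq_of_linearFactor_dvd h)
    exact congrArg (Sigma.mk i) (Subtype.val_injective.comp_left (eq_of_heq h))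
  · obtain ⟨hx₁, hx₂⟩ := Finset.mem_Icc.mp (Finset.mem_sigma.mp hx).1
    exact linearFactor_dvd_fI hcard ι (by omega) (by omega) _

/-- `f_0` divides `f^I`. -/
theorem stmt14 (q lam : ℕ) (hq : ∃ p e : ℕ, p.Prime ∧ 0 < e ∧ q = p ^ e)
    (hlam : 2 ≤ lam)
    (F : Type) [Field F] [Fintype F] [DecidableEq F] (hcard : Fintype.card F = q)
    (ι : Fin lam → ℕ) (hι : StrictMono ι) :
    f0 q lam F ∣ fI q lam F ι :=
  stmt14_general q lam hlam F hcard ι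

end
end

section
/- For every set I = {i_1 < ⋯ < i_λ} of λ nonnegative integers, the power f_0^{q^{i_1}} divides f^I in F_q[X_1,…,X_{λ−1}], where i_1 = min I. -/
noncomputable section
open MvPolynomial

/-!
Each linear factor `ℓ = X_i + ∑_{0<j<i} a_j X_j + a_0` (`a_j ∈ F_q`) of `f_0` divides every `f^I`:
modulo `ℓ` the elements `1, X_1, …, X_{λ-1}` satisfy an `F_q`-linear relation, which the Frobenius
powers `x ↦ x ^ q ^ i_s` carry over to every row `(1, X_1^{q^{i_s}}, …)` of `Mat^I`, so the
determinant vanishes. The factors are pairwise non-associated primes, hence `f_0 ∣ f^{I - i_1}`. Finally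
`f^I = (f^{I - i_1}) ^ q ^ i_1`, because `x ↦ x ^ q ^ i_1` is a ring endomorphism in
characteristic `p`.
-/

theorem Finset.prod_dvd_of_prime_of_associated_imp_eq {ι M₀ : Type*}
    [CommMonoidWithZero M₀] [IsCancelMulZero M₀] {s : Finset ι} {p : ι → M₀} {n : M₀}
    (hp : ∀ i ∈ s, Prime (p i)) (hs : ∀ i ∈ s, ∀ j ∈ s, Associated (p i) (p j) → i = j)
    (hdvd : ∀ i ∈ s, p i ∣ n) :
    ∏ i ∈ s, p i ∣ n := by
  classical
  refine Multiset.prod_primes_dvd n (by simpa using hp) (by simpa using hdvd) fun a => ?_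
  rw [Multiset.countP_map, ← Finset.filter_val, Finset.card_val, Finset.card_le_one]
  simp only [Finset.mem_filter]
  exact fun i hi j hj => hs i hi.1 j hj.1 (hi.2.symm.trans hj.2)

theorem MvPolynomial.prime_X_add_of_mem_supported {σ R : Type*} [CommRing R] [IsDomain R]
    {i : σ} {f : MvPolynomial σ R} (hf : f ∈ supported R {j | j ≠ i}) : Prime (X i + f) := by
  classical
  rw [supported_eq_range_rename] at hf
  obtain ⟨f, rfl⟩ := hf
  let φ := (renameEquiv R (Equiv.optionSubtypeNe i).symm).trans (optionEquivLeft R {j // j ≠ i})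
  have hC : φ.toAlgHom.comp (rename Subtype.val) = Polynomial.CAlgHom := by
    refine algHom_ext fun j => ?_
    simp [φ, Equiv.optionSubtypeNe_symm_of_ne j.2, optionEquivLeft_X_some]
  have hφ : φ (X i + rename Subtype.val f) = Polynomial.X - Polynomial.C (-f) := by
    rw [map_add, map_neg, sub_neg_eq_add]
    congr 1
    · simp [φ, optionEquivLeft_X_none]
    · exact congr($hC f)
  exact (MulEquiv.prime_iff φ.toMulEquiv).mp (hφ ▸ Polynomial.prime_X_sub_C _)

theorem MvPolynomial.dvd_sub_bind₁ {σ R : Type*} [CommRing R] {g : MvPolynomial σ R}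
    {v : σ → MvPolynomial σ R} (hv : ∀ j, g ∣ X j - v j) (f : MvPolynomial σ R) :
    g ∣ f - bind₁ v f := by
  have h : (Ideal.Quotient.mkₐ R (Ideal.span {g})).comp (bind₁ v) = Ideal.Quotient.mkₐ R _ :=
    algHom_ext fun j => by
      simpa [Ideal.Quotient.mkₐ_eq_mk, Ideal.Quotient.eq, Ideal.mem_span_singleton] using
        dvd_sub_comm.mp (hv j)
  rw [← Ideal.mem_span_singleton, ← Ideal.Quotient.eq, ← Ideal.Quotient.mkₐ_eq_mk R]
  exact congr($h f).symm

theorem MvPolynomial.exists_eq_C_mul_of_associated {σ R : Type*} [CommRing R] [IsReduced R]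
    {f g : MvPolynomial σ R} (h : Associated f g) : ∃ c, g = C c * f := by
  obtain ⟨u, rfl⟩ := h
  obtain ⟨c, -, hc⟩ := isUnit_iff_eq_C_of_isReduced.mp u.isUnit
  exact ⟨c, by rw [hc, mul_comm]⟩

section Moore

variable {n R : Type*} [Fintype n] [DecidableEq n] [CommRing R]

def mooreMatrix (q : ℕ) (k : n → ℕ) (y : n → R) : Matrix n n R :=
  Matrix.of fun s t => y t ^ q ^ k s

theorem RingHom.map_det_mooreMatrix {S : Type*} [CommRing S] (f : R →+* S) (q : ℕ) (k : n → ℕ)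
    (y : n → R) : f (mooreMatrix q k y).det = (mooreMatrix q k fun t => f (y t)).det := by
  rw [f.map_det]
  congr 1
  ext s t
  simp [mooreMatrix]

theorem det_mooreMatrix_eq_pow {p e q : ℕ} [ExpChar R p] (hq : q = p ^ e) {m : ℕ} {k : n → ℕ}
    (hm : ∀ s, m ≤ k s) (y : n → R) :
    (mooreMatrix q k y).det = (mooreMatrix q (fun s => k s - m) y).det ^ q ^ m := by
  have hqm : q ^ m = p ^ (e * m) := by rw [hq, pow_mul]
  rw [hqm, ← iterateFrobenius_def, RingHom.map_det_mooreMatrix]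
  congr 1
  ext s t
  simp only [mooreMatrix, Matrix.of_apply, iterateFrobenius_def, ← hqm,
    ← pow_mul, ← pow_add, Nat.add_sub_cancel' (hm s)]

/-- A relation `∑ w t * y t = 0` with coefficients fixed by `x ↦ x ^ q` survives every power
`x ↦ x ^ q ^ k s`, so `w` is in the kernel of the matrix. -/
theorem det_mooreMatrix_eq_zero [IsDomain R] {p e q : ℕ} [ExpChar R p] (hq : q = p ^ e)
    (k : n → ℕ) {y w : n → R} (hw0 : w ≠ 0) (hw : ∀ t, w t ^ q = w t)
    (hwy : ∑ t, w t * y t = 0) : (mooreMatrix q k y).det = 0 := by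
  refine Matrix.exists_mulVec_eq_zero_iff.mp ⟨w, hw0, funext fun s => ?_⟩
  have hfix : ∀ t, w t ^ q ^ k s = w t := fun t =>
    (congrFun (pow_iterate q (k s)) (w t)).symm.trans (Function.IsFixedPt.iterate (hw t) _)
  calc ∑ t, y t ^ q ^ k s * w t = ∑ t, (w t * y t) ^ p ^ (e * k s) := by
        simp only [pow_mul, ← hq, mul_pow, hfix, mul_comm]
    _ = 0 := by rw [← sum_pow_char_pow, hwy, zero_pow (expChar_pow_pos R p _).ne']

end Moore

section LinearForm

variable {R : Type*} [CommRing R]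

/-- `X j` with `X 0` specialised to `1`: the `t`-th column of `Mat^I` is `(dehomX t ^ q ^ i_s)_s`,
and `linearForm i a` is the factor `X_i + ∑_{0<j<i} a_j X_j + a_0` of `f_0`. -/
def dehomX (j : ℕ) : MvPolynomial ℕ R := if j = 0 then 1 else X j

def linearForm (i : ℕ) (a : Fin i → R) : MvPolynomial ℕ R :=
  X i + ∑ j : Fin i, C (a j) * dehomX j

def linearFormCoeffs (i : ℕ) (a : Fin i → R) (j : ℕ) : R :=
  if h : j < i then a ⟨j, h⟩ else if j = i then 1 else 0

theorem linearForm_eq_sum_range {i : ℕ} (hi : 0 < i) (a : Fin i → R) :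
    linearForm i a = ∑ j ∈ Finset.range (i + 1), C (linearFormCoeffs i a j) * dehomX j := by
  rw [Finset.sum_range_succ, ← Fin.sum_univ_eq_sum_range, linearForm, add_comm]
  simp [linearFormCoeffs, dehomX, hi.ne']

theorem linearForm_eq_sum_fin {i lam : ℕ} (hi : 0 < i) (hil : i < lam) (a : Fin i → R) :
    linearForm i a = ∑ t : Fin lam, C (linearFormCoeffs i a t) * dehomX t := by
  rw [linearForm_eq_sum_range hi,
    Fin.sum_univ_eq_sum_range (fun j => C (linearFormCoeffs i a j) * dehomX j)]
  refine Finset.sum_subset (Finset.range_subset_range.mpr hil) fun j _ hj => ?_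
  simp only [Finset.mem_range] at hj
  simp [linearFormCoeffs, show ¬ j < i by omega, show j ≠ i by omega]

theorem coeff_single_dehomX {j k : ℕ} (hk : k ≠ 0) :
    coeff (Finsupp.single k 1) (dehomX j : MvPolynomial ℕ R) = if j = k then 1 else 0 := by
  have h0 : (0 : ℕ →₀ ℕ) ≠ Finsupp.single k 1 := (Finsupp.single_ne_zero.mpr one_ne_zero).symm
  unfold dehomX
  split_ifs with hj hjk hjk <;> simp_all [coeff_X, coeff_one, Finsupp.single_left_inj]

theorem coeff_zero_dehomX (j : ℕ) :
    coeff 0 (dehomX j : MvPolynomial ℕ R) = if 0 = j then 1 else 0 := by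
  unfold dehomX
  split_ifs <;> simp_all [eq_comm]

theorem coeff_single_linearForm {i k : ℕ} (hi : 0 < i) (hk : k ≠ 0) (a : Fin i → R) :
    coeff (Finsupp.single k 1) (linearForm i a) = linearFormCoeffs i a k := by
  rw [linearForm_eq_sum_range hi, coeff_sum]
  simp only [coeff_C_mul, coeff_single_dehomX hk, mul_ite, mul_one, mul_zero,
    Finset.sum_ite_eq', Finset.mem_range]
  split_ifs with h
  · rfl
  · simp [linearFormCoeffs, show ¬ k < i by omega, show k ≠ i by omega]

theorem coeff_zero_linearForm {i : ℕ} (hi : 0 < i) (a : Fin i → R) :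
    coeff 0 (linearForm i a) = linearFormCoeffs i a 0 := by
  rw [linearForm_eq_sum_range hi, coeff_sum]
  simp [coeff_zero_dehomX]

theorem linearFormCoeffs_injective (i : ℕ) :
    Function.Injective (linearFormCoeffs (R := R) i) := fun a a' h =>
  funext fun j => by simpa [linearFormCoeffs] using congrFun h j

theorem linearForm_injective {i : ℕ} (hi : 0 < i) :
    Function.Injective (linearForm (R := R) i) :=
  fun a a' h => linearFormCoeffs_injective i <| funext fun k => by
    rcases eq_or_ne k 0 with rfl | hk
    · simpa [coeff_zero_linearForm hi] using congr_arg (coeff 0) h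
    · simpa [coeff_single_linearForm hi hk] using congr_arg (coeff (Finsupp.single k 1)) h

theorem le_of_linearForm_eq_C_mul [Nontrivial R] {i i' : ℕ} (hi : 0 < i) (hi' : 0 < i')
    {a : Fin i → R} {a' : Fin i' → R} {c : R} (h : linearForm i' a' = C c * linearForm i a) :
    i' ≤ i := by
  by_contra! hlt
  have := congr_arg (coeff (Finsupp.single i' 1)) h
  simp [coeff_C_mul, coeff_single_linearForm, hi, hi', hi'.ne', linearFormCoeffs, hlt.not_gt,
    hlt.ne'] at this

theorem sigma_eq_of_associated_linearForm [IsDomain R] {x y : Σ i, Fin i → R} (hx : 0 < x.1)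
    (hy : 0 < y.1) (h : Associated (linearForm x.1 x.2) (linearForm y.1 y.2)) : x = y := by
  obtain ⟨i, a⟩ := x
  obtain ⟨i', a'⟩ := y
  dsimp only at hx hy h
  obtain ⟨c, hc⟩ := exists_eq_C_mul_of_associated h
  obtain ⟨c', hc'⟩ := exists_eq_C_mul_of_associated h.symm
  obtain rfl : i = i' := le_antisymm (le_of_linearForm_eq_C_mul hy hx hc')
    (le_of_linearForm_eq_C_mul hx hy hc)
  have hc1 : c = 1 := by
    simpa [coeff_C_mul, coeff_single_linearForm, hx, hx.ne', linearFormCoeffs] using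
      (congr_arg (coeff (Finsupp.single i 1)) hc).symm
  rw [hc1, C_1, one_mul] at hc
  rw [linearForm_injective hx hc]

theorem dehomX_mem_supported [Nontrivial R] {i j : ℕ} (hj : j ≠ i) :
    (dehomX j : MvPolynomial ℕ R) ∈ supported R {n | n ≠ i} := by
  unfold dehomX
  split_ifs
  · exact Subalgebra.one_mem _
  · exact X_mem_supported.mpr hj

theorem prime_linearForm [IsDomain R] (i : ℕ) (a : Fin i → R) : Prime (linearForm i a) :=
  prime_X_add_of_mem_supported <| Subalgebra.sum_mem _ fun j _ =>
    Subalgebra.mul_mem _ (Subalgebra.algebraMap_mem _ _) (dehomX_mem_supported j.2.ne)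

theorem bind₁_update_linearForm (i : ℕ) (a : Fin i → R) :
    bind₁ (Function.update X i (X i - linearForm i a)) (linearForm i a) = 0 := by
  have hfix : ∀ j : Fin i,
      bind₁ (Function.update X i (X i - linearForm i a)) (dehomX j) = dehomX j := by
    intro j
    unfold dehomX
    split_ifs <;> simp [Function.update_of_ne j.2.ne]
  conv_lhs => enter [2]; rw [linearForm]
  simp only [map_add, map_sum, map_mul, bind₁_X_right, bind₁_C_right, hfix, Function.update_self]
  rw [linearForm]
  ring

/-- The substitution `X i ↦ X i - linearForm i a` is the identity modulo `linearForm i a` and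
turns the columns `dehomX t` into vectors with the `F_q`-linear relation `linearFormCoeffs i a`. -/
theorem linearForm_dvd_det_mooreMatrix [IsDomain R] {p e q : ℕ} [ExpChar R p] (hq : q = p ^ e)
    {i lam : ℕ} (hi : 0 < i) (hil : i < lam) {a : Fin i → R} (ha : ∀ j, a j ^ q = a j)
    (k : Fin lam → ℕ) : linearForm i a ∣ (mooreMatrix q k fun t : Fin lam => dehomX t).det := by
  set v := Function.update X i (X i - linearForm i a)
  have hv : ∀ j, linearForm i a ∣ X j - v j := by
    intro j
    rcases eq_or_ne j i with rfl | hj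
    · simp [v]
    · simp [v, hj]
  set w : Fin lam → MvPolynomial ℕ R := fun t => C (linearFormCoeffs i a t)
  have hw0 : w ≠ 0 := Function.ne_iff.mpr ⟨⟨i, hil⟩, by simp [w, linearFormCoeffs]⟩
  have hw : ∀ t, w t ^ q = w t := by
    intro t
    rw [← map_pow]
    congr 1
    unfold linearFormCoeffs
    split_ifs
    · exact ha _
    · exact one_pow _
    · exact zero_pow (hq ▸ (expChar_pow_pos R p e).ne')
  have hwy : ∑ t, w t * bind₁ v (dehomX t) = 0 := calc
    _ = bind₁ v (linearForm i a) := by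
      rw [linearForm_eq_sum_fin hi hil a, map_sum]
      simp only [w, map_mul, bind₁_C_right]
    _ = 0 := bind₁_update_linearForm i a
  have hdvd := dvd_sub_bind₁ hv (mooreMatrix q k fun t : Fin lam => dehomX t).det
  rwa [← AlgHom.coe_toRingHom, RingHom.map_det_mooreMatrix, AlgHom.coe_toRingHom,
    det_mooreMatrix_eq_zero hq k hw0 hw hwy, sub_zero] at hdvd

end LinearForm

theorem fI_eq_det_mooreMatrix (q lam : ℕ) (F : Type) [CommRing F] (ι : Fin lam → ℕ) :
    fI q lam F ι = (mooreMatrix q ι fun t : Fin lam => dehomX t).det := by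
  unfold fI mooreMatrix dehomX
  congr 1
  refine Matrix.ext fun s t => ?_
  simp only [Matrix.of_apply]
  split_ifs <;> simp

theorem f0_eq_prod {q lam : ℕ} (hlam : 2 ≤ lam) (F : Type) [Field F] [Fintype F]
    [DecidableEq F] :
    f0 q lam F = ∏ x ∈ (Finset.Icc 1 (lam - 1)).sigma
      (fun i => (Finset.univ : Finset (Fin i → {x : F // x ^ q = x}))),
      linearForm x.1 fun j => (x.2 j).val := by
  have hIcc : Finset.Icc 1 (lam - 1) = insert 1 (Finset.Icc 2 (lam - 1)) := by
    ext; simp only [Finset.mem_Icc, Finset.mem_insert]; omega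
  rw [Finset.prod_sigma, hIcc, Finset.prod_insert (by simp), f0]
  congr 1
  rw [Finset.prod_subtype _ (fun x => Finset.mem_filter_univ x)]
  refine (Fintype.prod_equiv (Equiv.funUnique (Fin 1) _) _ _ fun a => ?_).symm
  simp [linearForm, dehomX]

theorem f0_dvd_fI {p e q lam : ℕ} (hlam : 2 ≤ lam) {F : Type} [Field F] [Fintype F]
    [DecidableEq F] [ExpChar F p] (hq : q = p ^ e) (ι : Fin lam → ℕ) :
    f0 q lam F ∣ fI q lam F ι := by
  rw [f0_eq_prod hlam, fI_eq_det_mooreMatrix]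
  have hinj : Function.Injective (Sigma.map (β₂ := fun i => Fin i → F) id
      fun i (a : Fin i → {x : F // x ^ q = x}) => Subtype.val ∘ a) :=
    Function.injective_id.sigma_map fun _ => Subtype.val_injective.comp_left
  refine Finset.prod_dvd_of_prime_of_associated_imp_eq (fun x _ => prime_linearForm _ _)
    (fun x hx y hy h => ?_) (fun x hx => ?_)
  · simp only [Finset.mem_sigma, Finset.mem_Icc] at hx hy
    exact hinj (sigma_eq_of_associated_linearForm hx.1.1 hy.1.1 h)
  · simp only [Finset.mem_sigma, Finset.mem_Icc] at hx
    exact linearForm_dvd_det_mooreMatrix hq hx.1.1 (by omega) (fun j => (x.2 j).2) ι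

theorem stmt16_general (q lam : ℕ)
    (hlam : 2 ≤ lam) [NeZero lam]
    (F : Type) [Field F] [Fintype F] [DecidableEq F] (hcard : Fintype.card F = q)
    (ι : Fin lam → ℕ) (hι : StrictMono ι) :
    f0 q lam F ^ q ^ ι 0 ∣ fI q lam F ι := by
  obtain ⟨n, hp, hcardp⟩ := FiniteField.card F (ringChar F)
  have : Fact (ringChar F).Prime := ⟨hp⟩
  have hq : q = ringChar F ^ (n : ℕ) := hcard ▸ hcardp
  have hmono : ∀ s, ι 0 ≤ ι s := fun s => hι.monotone (Fin.zero_le s)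
  rw [fI_eq_det_mooreMatrix, det_mooreMatrix_eq_pow hq hmono, ← fI_eq_det_mooreMatrix]
  exact pow_dvd_pow_of_dvd (f0_dvd_fI hlam hq _) _

/-- `f_0^{q^{i_1}}` divides `f^I`, where `i_1 = min I`. -/
theorem stmt16 (q lam : ℕ) (hq : ∃ p e : ℕ, p.Prime ∧ 0 < e ∧ q = p ^ e)
    (hlam : 2 ≤ lam) [NeZero lam]
    (F : Type) [Field F] [Fintype F] [DecidableEq F] (hcard : Fintype.card F = q)
    (ι : Fin lam → ℕ) (hι : StrictMono ι) :
    f0 q lam F ^ q ^ ι 0 ∣ fI q lam F ι :=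
  stmt16_general q lam hlam F hcard ι hι

end
end
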